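/- (Proximal point method, weakly monotone case.) Let η ∈ ℝⁿ be a positive vector and let F : ℝⁿ → ℝⁿ be continuously differentiable, Lipschitz with respect to ‖·‖_{∞,η⁻¹}, and satisfy μ_{∞,η⁻¹}(−DF(x)) ≤ 0 for all x ∈ ℝⁿ. Suppose Zero(F) ≠ ∅. Then for every α > 0, any sequence satisfying x_{k+1} + αF(x_{k+1}) = x_k for all k (from any initial point x_0) converges to some element of Zero(F). -/

import Mathlib

/-! In a coordinate where `u - v` attains its weighted norm, the bound on the logarithmic norm of
the Jacobian gives, by the mean value theorem along the segment, that `F u - F v` has the same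
sign. Hence the resolvent step `x_{k+1} ↦ x_{k+1} + α F(x_{k+1}) = x_k` does not decrease
`‖·‖_{∞,η⁻¹}`-distances, so the iterates are Fejér monotone towards `Zero(F)`, bounded, and their
step lengths decrease to some `s`. A cluster point of the shifted sequences is an orbit `q` whose
steps all have length `s`. The coordinates attaining the norm in step `m + 1` also attain it, with
the same increment, in step `m`; so some coordinate moves by `±η i * s` in every step, and
boundedness forces `s = 0`. Then `q 0` is a zero, and Fejér monotonicity upgrades convergence
along a subsequence to convergence. -/

open Filter

/-- Diagonally weighted ℓ∞ norm: ‖x‖_{∞,η⁻¹} = max_i |x_i|/η_i. -/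
noncomputable def wNorm {n : ℕ} (η x : Fin n → ℝ) : ℝ := ⨆ i, |x i| / η i

/-- Diagonally weighted ℓ∞ logarithmic norm of a matrix. -/
noncomputable def logNorm {n : ℕ} (η : Fin n → ℝ) (A : Matrix (Fin n) (Fin n) ℝ) : ℝ :=
  ⨆ i, (A i i + ∑ j ∈ Finset.univ.erase i, (η j / η i) * |A i j|)

/-- Jacobian matrix of `F` at `x`: (DF(x))_{ij} = ∂F_i/∂x_j. -/
noncomputable def jac {n : ℕ} (F : (Fin n → ℝ) → (Fin n → ℝ)) (x : Fin n → ℝ) :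
    Matrix (Fin n) (Fin n) ℝ :=
  fun i j => fderiv ℝ F x (Pi.single j 1) i

open Finset Matrix Topology

lemma exists_forall_mem_of_antitone {ι : Type*} [Finite ι] {A : ℕ → Set ι} (hA : Antitone A)
    (hne : ∀ m, (A m).Nonempty) : ∃ i, ∀ m, i ∈ A m := by
  choose f hf using hne
  obtain ⟨i, hi⟩ := Finite.exists_infinite_fiber f
  refine ⟨i, fun m => ?_⟩
  obtain ⟨k, hk, hmk⟩ := (Set.infinite_coe_iff.1 hi).exists_gt m
  exact hA hmk.le (hk ▸ hf k)

lemma exists_tendsto_shift_of_isCompact {X : Type*} [TopologicalSpace X] [FirstCountableTopology X]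
    {K : Set X} (hK : IsCompact K) {x : ℕ → X} (hx : ∀ k, x k ∈ K) :
    ∃ q : ℕ → X, (∀ m, q m ∈ K) ∧ ∃ φ : ℕ → ℕ, StrictMono φ ∧
      ∀ m, Tendsto (fun j => x (φ j + m)) atTop (𝓝 (q m)) := by
  obtain ⟨q, hqK, φ, hφ, hq⟩ := (isCompact_univ_pi fun _ : ℕ => hK).isSeqCompact
    (x := fun j m => x (j + m)) fun j => Set.mem_univ_pi.2 fun m => hx (j + m)
  exact ⟨q, Set.mem_univ_pi.1 hqK, φ, hφ, tendsto_pi_nhds.1 hq⟩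

lemma orbit_of_tendsto_shift {E : Type*} [TopologicalSpace E] [T2Space E] [Add E] [ContinuousAdd E]
    [SMul ℝ E] [ContinuousConstSMul ℝ E] {F : E → E} (hF : Continuous F) {α : ℝ} {x : ℕ → E}
    (hx : ∀ k, x (k + 1) + α • F (x (k + 1)) = x k) {q : ℕ → E} {φ : ℕ → ℕ}
    (hq : ∀ m, Tendsto (fun j => x (φ j + m)) atTop (𝓝 (q m))) (m : ℕ) :
    q (m + 1) + α • F (q (m + 1)) = q m := by
  have h := (hq (m + 1)).add (((hF.tendsto _).comp (hq (m + 1))).const_smul α)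
  simp only [Function.comp_def, ← add_assoc, hx] at h
  exact tendsto_nhds_unique h (hq m)

section

variable {n : ℕ} {η : Fin n → ℝ}

lemma wNorm_eq_norm_div (hη : ∀ i, 0 < η i) (v : Fin n → ℝ) : wNorm η v = ‖v / η‖ := by
  have hcoord : ∀ i, |v i| / η i = ‖(v / η) i‖ := fun i => by
    rw [Pi.div_apply, Real.norm_eq_abs, abs_div, abs_of_pos (hη i)]
  rcases isEmpty_or_nonempty (Fin n) with hn | hn
  · simp [wNorm, Subsingleton.elim (v / η) 0]
  · simp only [wNorm, hcoord]
    exact (IsGreatest.pi_norm _).csSup_eq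

lemma wNorm_nonneg (hη : ∀ i, 0 < η i) (v : Fin n → ℝ) : 0 ≤ wNorm η v :=
  wNorm_eq_norm_div hη v ▸ norm_nonneg _

lemma abs_apply_le_mul_wNorm (hη : ∀ i, 0 < η i) (v : Fin n → ℝ) (i : Fin n) :
    |v i| ≤ η i * wNorm η v := by
  have h := norm_le_pi_norm (v / η) i
  rwa [← wNorm_eq_norm_div hη, Pi.div_apply, Real.norm_eq_abs, abs_div, abs_of_pos (hη i),
    div_le_iff₀' (hη i)] at h

lemma exists_abs_apply_eq_mul_wNorm [Nonempty (Fin n)] (hη : ∀ i, 0 < η i) (v : Fin n → ℝ) :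
    ∃ i, |v i| = η i * wNorm η v := by
  obtain ⟨i, hi⟩ := (IsGreatest.pi_norm (v / η)).1
  refine ⟨i, ?_⟩
  rw [wNorm_eq_norm_div hη, ← hi]
  dsimp only
  rw [Pi.div_apply, Real.norm_eq_abs, abs_div, abs_of_pos (hη i),
    mul_div_cancel₀ _ (hη i).ne']

lemma wNorm_eq_zero (hη : ∀ i, 0 < η i) {v : Fin n → ℝ} : wNorm η v = 0 ↔ v = 0 := by
  rw [wNorm_eq_norm_div hη, norm_eq_zero]
  refine ⟨fun h => funext fun i => ?_, fun h => funext fun i => by simp [h]⟩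
  simpa [(hη i).ne'] using congrFun h i

lemma mem_Icc_of_wNorm_sub_le (hη : ∀ i, 0 < η i) {y z : Fin n → ℝ} {R : ℝ}
    (h : wNorm η (y - z) ≤ R) : y ∈ Set.Icc (z - R • η) (z + R • η) := by
  have hi : ∀ i, |y i - z i| ≤ R * η i := fun i =>
    (abs_apply_le_mul_wNorm hη (y - z) i).trans (by nlinarith [hη i])
  constructor <;> intro i <;> simp only [Pi.add_apply, Pi.sub_apply, Pi.smul_apply, smul_eq_mul]
  · linarith [(abs_le.1 (hi i)).1]
  · linarith [(abs_le.1 (hi i)).2]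

lemma wNorm_sub_comm (u v : Fin n → ℝ) : wNorm η (u - v) = wNorm η (v - u) := by
  simp only [wNorm, Pi.sub_apply, abs_sub_comm]

lemma continuous_wNorm (hη : ∀ i, 0 < η i) : Continuous (wNorm η) := by
  rw [funext (wNorm_eq_norm_div hη)]
  exact continuous_norm.comp (continuous_id.div_const η)

lemma tendsto_iff_wNorm_sub_tendsto_zero (hη : ∀ i, 0 < η i) {ι : Type*} {l : Filter ι}
    {x : ι → Fin n → ℝ} {p : Fin n → ℝ} :
    Tendsto x l (𝓝 p) ↔ Tendsto (fun k => wNorm η (x k - p)) l (𝓝 0) := by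
  constructor
  · intro h
    have h0 := ((continuous_wNorm hη).tendsto 0).comp (tendsto_sub_nhds_zero_iff.2 h)
    simpa [Function.comp_def, wNorm] using h0
  · intro h
    refine tendsto_pi_nhds.2 fun i => tendsto_iff_norm_sub_tendsto_zero.2 ?_
    refine squeeze_zero (fun _ => norm_nonneg _)
      (fun k => abs_apply_le_mul_wNorm hη (x k - p) i) ?_
    simpa using h.const_mul (η i)

lemma sum_erase_mul_abs_le_of_logNorm_neg_nonpos (hη : ∀ i, 0 < η i)
    {A : Matrix (Fin n) (Fin n) ℝ} (hA : logNorm η (-A) ≤ 0) (i : Fin n) :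
    ∑ j ∈ univ.erase i, η j * |A i j| ≤ η i * A i i := by
  have hrow : -A i i + ∑ j ∈ univ.erase i, η j / η i * |A i j| ≤ 0 := by
    refine le_trans ?_ hA
    unfold logNorm
    simpa only [Matrix.neg_apply, abs_neg] using
      le_ciSup (f := fun i => (-A) i i + ∑ j ∈ univ.erase i, η j / η i * |(-A) i j|)
        (Set.finite_range _).bddAbove i
  have hscale : ∑ j ∈ univ.erase i, η j * |A i j|
      = η i * ∑ j ∈ univ.erase i, η j / η i * |A i j| := by
    rw [mul_sum]
    refine sum_congr rfl fun j _ => ?_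
    field_simp [(hη i).ne']
  rw [hscale]
  exact mul_le_mul_of_nonneg_left (by linarith) (hη i).le

lemma mulVec_apply_nonneg_of_logNorm_neg_nonpos (hη : ∀ i, 0 < η i)
    {A : Matrix (Fin n) (Fin n) ℝ} (hA : logNorm η (-A) ≤ 0) {w : Fin n → ℝ} {i : Fin n}
    (hwi : w i = η i * wNorm η w) : 0 ≤ (A *ᵥ w) i := by
  set N := wNorm η w
  have hoff : ∀ j ∈ univ.erase i, -(η j * |A i j| * N) ≤ A i j * w j := fun j _ => by
    have hj := abs_apply_le_mul_wNorm hη w j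
    have := neg_abs_le (A i j * w j)
    rw [abs_mul] at this
    nlinarith [abs_nonneg (A i j)]
  calc 0 ≤ (η i * A i i - ∑ j ∈ univ.erase i, η j * |A i j|) * N :=
        mul_nonneg (sub_nonneg.2 (sum_erase_mul_abs_le_of_logNorm_neg_nonpos hη hA i))
          (wNorm_nonneg hη w)
    _ = A i i * w i + ∑ j ∈ univ.erase i, -(η j * |A i j| * N) := by
        rw [hwi, sum_neg_distrib, ← sum_mul]; ring
    _ ≤ A i i * w i + ∑ j ∈ univ.erase i, A i j * w j := by gcongr with j hj; exact hoff j hj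
    _ = (A *ᵥ w) i := by rw [add_sum_erase _ (fun j => A i j * w j) (mem_univ i)]; rfl

lemma jac_mulVec (F : (Fin n → ℝ) → (Fin n → ℝ)) (p w : Fin n → ℝ) :
    jac F p *ᵥ w = fderiv ℝ F p w :=
  LinearMap.toMatrix'_mulVec (fderiv ℝ F p : (Fin n → ℝ) →ₗ[ℝ] (Fin n → ℝ)) w

lemma apply_sub_nonneg_of_logNorm_neg_jac_nonpos (hη : ∀ i, 0 < η i)
    {F : (Fin n → ℝ) → (Fin n → ℝ)} (hF : Differentiable ℝ F)
    (hmono : ∀ x, logNorm η (-(jac F x)) ≤ 0) {u v : Fin n → ℝ} {i : Fin n}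
    (hi : u i - v i = η i * wNorm η (u - v)) : 0 ≤ F u i - F v i := by
  set w := u - v
  have hderiv : ∀ t : ℝ, HasDerivAt (fun t => F (v + t • w) i) ((jac F (v + t • w) *ᵥ w) i) t := by
    intro t
    have hline : HasDerivAt (fun t : ℝ => v + t • w) w t := by
      simpa using ((hasDerivAt_id t).smul_const w).const_add v
    rw [jac_mulVec]
    exact hasDerivAt_pi.1 ((hF _).hasFDerivAt.comp_hasDerivAt t hline) i
  have hg := monotone_of_hasDerivAt_nonneg hderiv
    fun t => mulVec_apply_nonneg_of_logNorm_neg_nonpos hη (hmono _) hi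
  simpa [w] using hg zero_le_one

/-- Monotonicity of `F` for `‖·‖_{∞,η⁻¹}`, in its coordinatewise (weak pairing) form. -/
def PeakMonotone (η : Fin n → ℝ) (F : (Fin n → ℝ) → (Fin n → ℝ)) : Prop :=
  ∀ u v i, |u i - v i| = η i * wNorm η (u - v) → 0 ≤ (u i - v i) * (F u i - F v i)

lemma peakMonotone_of_logNorm_neg_jac_nonpos (hη : ∀ i, 0 < η i)
    {F : (Fin n → ℝ) → (Fin n → ℝ)} (hF : Differentiable ℝ F)
    (hmono : ∀ x, logNorm η (-(jac F x)) ≤ 0) : PeakMonotone η F := by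
  intro u v i hi
  rcases abs_cases (u i - v i) with ⟨habs, hpos⟩ | ⟨habs, hneg⟩
  · exact mul_nonneg hpos
      (apply_sub_nonneg_of_logNorm_neg_jac_nonpos hη hF hmono (habs ▸ hi))
  · have hvu : v i - u i = η i * wNorm η (v - u) := by
      rw [wNorm_sub_comm, ← hi, habs, neg_sub]
    have := apply_sub_nonneg_of_logNorm_neg_jac_nonpos hη hF hmono hvu
    nlinarith

lemma add_smul_sub_add_smul_apply (u v a b : Fin n → ℝ) (α : ℝ) (i : Fin n) :
    (u + α • a - (v + α • b)) i = (u i - v i) + α * (a i - b i) := by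
  simp only [Pi.add_apply, Pi.sub_apply, Pi.smul_apply, smul_eq_mul]
  ring

namespace PeakMonotone

variable {F : (Fin n → ℝ) → (Fin n → ℝ)} {α : ℝ} {x : ℕ → Fin n → ℝ}

lemma wNorm_sub_le [Nonempty (Fin n)] (hη : ∀ i, 0 < η i) (hF : PeakMonotone η F) (hα : 0 ≤ α)
    (u v : Fin n → ℝ) : wNorm η (u - v) ≤ wNorm η (u + α • F u - (v + α • F v)) := by
  obtain ⟨i, hi⟩ := exists_abs_apply_eq_mul_wNorm hη (u - v)
  have hsign := mul_nonneg hα (hF u v i hi)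
  have hcoord := add_smul_sub_add_smul_apply u v (F u) (F v) α i
  refine le_of_mul_le_mul_left ?_ (hη i)
  calc η i * wNorm η (u - v) = |u i - v i| := hi.symm
    _ ≤ |(u i - v i) + α * (F u i - F v i)| := sq_le_sq.1 (by nlinarith)
    _ ≤ η i * wNorm η (u + α • F u - (v + α • F v)) :=
        hcoord ▸ abs_apply_le_mul_wNorm hη _ i

lemma apply_eq_of_wNorm_le (hη : ∀ i, 0 < η i) (hF : PeakMonotone η F) (hα : 0 ≤ α)
    {u v : Fin n → ℝ} {i : Fin n} (hi : |u i - v i| = η i * wNorm η (u - v))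
    (hle : wNorm η (u + α • F u - (v + α • F v)) ≤ wNorm η (u - v)) :
    (u + α • F u - (v + α • F v)) i = u i - v i := by
  have hsign := mul_nonneg hα (hF u v i hi)
  have hcoord := add_smul_sub_add_smul_apply u v (F u) (F v) α i
  have habs : |(u i - v i) + α * (F u i - F v i)| ≤ |u i - v i| :=
    hi ▸ hcoord ▸ (abs_apply_le_mul_wNorm hη _ i).trans
      (mul_le_mul_of_nonneg_left hle (hη i).le)
  have hsq := sq_le_sq.2 habs
  rw [hcoord]
  nlinarith [sq_nonneg (α * (F u i - F v i))]

lemma antitone_wNorm_sub_of_apply_eq_zero [Nonempty (Fin n)] (hη : ∀ i, 0 < η i)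
    (hF : PeakMonotone η F) (hα : 0 ≤ α) (hx : ∀ k, x (k + 1) + α • F (x (k + 1)) = x k)
    {p : Fin n → ℝ} (hp : F p = 0) : Antitone fun k => wNorm η (x k - p) :=
  antitone_nat_of_succ_le fun k => by
    simpa only [hp, smul_zero, add_zero, hx] using hF.wNorm_sub_le hη hα (x (k + 1)) p

lemma antitone_wNorm_sub_succ [Nonempty (Fin n)] (hη : ∀ i, 0 < η i)
    (hF : PeakMonotone η F) (hα : 0 ≤ α) (hx : ∀ k, x (k + 1) + α • F (x (k + 1)) = x k) :
    Antitone fun k => wNorm η (x k - x (k + 1)) :=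
  antitone_nat_of_succ_le fun k => by
    simpa only [hx] using hF.wNorm_sub_le hη hα (x (k + 1)) (x (k + 1 + 1))

lemma exists_forall_wNorm_sub_succ_eq_of_tendsto_shift [Nonempty (Fin n)] (hη : ∀ i, 0 < η i)
    (hF : PeakMonotone η F) (hα : 0 ≤ α) (hx : ∀ k, x (k + 1) + α • F (x (k + 1)) = x k)
    {q : ℕ → Fin n → ℝ} {φ : ℕ → ℕ} (hφ : StrictMono φ)
    (hq : ∀ m, Tendsto (fun j => x (φ j + m)) atTop (𝓝 (q m))) :
    ∃ s, ∀ m, wNorm η (q m - q (m + 1)) = s := by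
  have hanti := hF.antitone_wNorm_sub_succ hη hα hx
  have hlim := tendsto_atTop_ciInf hanti ⟨0, Set.forall_mem_range.2 fun k => wNorm_nonneg hη _⟩
  refine ⟨_, fun m => tendsto_nhds_unique
    (((continuous_wNorm hη).tendsto _).comp ((hq m).sub (hq (m + 1)))) (hlim.comp ?_)⟩
  exact tendsto_atTop_mono (fun j => Nat.le_add_right _ _) hφ.tendsto_atTop

/-- Some coordinate attains the weighted norm in every step, and then moves by the same amount
`±η i * s` in every step. -/
lemma eq_zero_of_isBounded_of_forall_wNorm_sub_succ_eq [Nonempty (Fin n)] (hη : ∀ i, 0 < η i)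
    (hF : PeakMonotone η F) (hα : 0 ≤ α) (hx : ∀ k, x (k + 1) + α • F (x (k + 1)) = x k)
    {s : ℝ} (hs : ∀ m, wNorm η (x m - x (m + 1)) = s) (hb : Bornology.IsBounded (Set.range x)) :
    s = 0 := by
  have hstep : ∀ m i, |x (m + 1) i - x (m + 2) i| = η i * s →
      x m i - x (m + 1) i = x (m + 1) i - x (m + 2) i := by
    intro m i hi
    have h := hF.apply_eq_of_wNorm_le hη hα (u := x (m + 1)) (v := x (m + 2)) (hs (m + 1) ▸ hi)
      (by rw [hx, hx, hs, hs])
    rwa [hx, hx] at h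
  obtain ⟨i, hi⟩ : ∃ i, ∀ m, |x m i - x (m + 1) i| = η i * s := by
    refine exists_forall_mem_of_antitone (A := fun m => {i | |x m i - x (m + 1) i| = η i * s})
      (antitone_nat_of_succ_le fun m i hi => ?_) fun m => ?_
    · show _ = _
      rw [hstep m i hi]
      exact hi
    · obtain ⟨i, hi⟩ := exists_abs_apply_eq_mul_wNorm hη (x m - x (m + 1))
      exact ⟨i, by rw [← hs m]; exact hi⟩
  have hconst : ∀ m, x m i - x (m + 1) i = x 0 i - x 1 i := by
    intro m
    induction m with
    | zero => rfl
    | succ m ih => rw [← hstep m i (hi (m + 1)), ih]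
  have htel : ∀ d : ℕ, x 0 i - x d i = d * (x 0 i - x 1 i) := by
    intro d
    induction d with
    | zero => simp
    | succ d ih =>
      push_cast
      linear_combination ih + hconst d
  obtain ⟨C, hC⟩ := hb.exists_norm_le
  have hbound : ∀ d : ℕ, d * (η i * s) ≤ 2 * C := by
    intro d
    have h0 := (norm_le_pi_norm (x 0) i).trans (hC _ ⟨0, rfl⟩)
    have hd := (norm_le_pi_norm (x d) i).trans (hC _ ⟨d, rfl⟩)
    rw [Real.norm_eq_abs] at h0 hd
    calc d * (η i * s) = |x 0 i - x d i| := by rw [htel, abs_mul, hi 0, Nat.abs_cast]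
      _ ≤ |x 0 i| + |x d i| := abs_sub _ _
      _ ≤ 2 * C := by linarith
  have hs0 : 0 ≤ s := hs 0 ▸ wNorm_nonneg hη _
  refine le_antisymm (not_lt.1 fun hpos => ?_) hs0
  obtain ⟨d, hd⟩ := exists_nat_gt (2 * C / (η i * s))
  have := hbound d
  rw [div_lt_iff₀ (mul_pos (hη i) hpos)] at hd
  linarith

end PeakMonotone

end

theorem stmt_10_general {n : ℕ} (η : Fin n → ℝ) (hη : ∀ i, 0 < η i)
    (F : (Fin n → ℝ) → (Fin n → ℝ)) (hF : ContDiff ℝ 1 F)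
    (hmono : ∀ x, logNorm η (-(jac F x)) ≤ 0)
    (hzero : ∃ z : Fin n → ℝ, F z = 0)
    (α : ℝ) (hα : 0 < α)
    (x : ℕ → (Fin n → ℝ)) (hx : ∀ k, x (k + 1) + α • F (x (k + 1)) = x k) :
    ∃ xs : Fin n → ℝ, F xs = 0 ∧ Tendsto x atTop (nhds xs) := by
  rcases isEmpty_or_nonempty (Fin n) with hn | hn
  · exact ⟨0, Subsingleton.elim _ _, Subsingleton.elim x 0 ▸ tendsto_const_nhds⟩
  obtain ⟨z, hz⟩ := hzero
  have hFm := peakMonotone_of_logNorm_neg_jac_nonpos hη (hF.differentiable one_ne_zero) hmono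
  have hbox (k : ℕ) : x k ∈ Set.Icc (z - wNorm η (x 0 - z) • η) (z + wNorm η (x 0 - z) • η) :=
    mem_Icc_of_wNorm_sub_le hη (hFm.antitone_wNorm_sub_of_apply_eq_zero hη hα.le hx hz k.zero_le)
  obtain ⟨q, hqK, φ, hφ, hq⟩ := exists_tendsto_shift_of_isCompact isCompact_Icc hbox
  have hq_orbit := orbit_of_tendsto_shift hF.continuous hx hq
  obtain ⟨s, hs⟩ := hFm.exists_forall_wNorm_sub_succ_eq_of_tendsto_shift hη hα.le hx hφ hq
  have hs0 := hFm.eq_zero_of_isBounded_of_forall_wNorm_sub_succ_eq hη hα.le hq_orbit hs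
    (isCompact_Icc.isBounded.subset (Set.range_subset_iff.2 hqK))
  have hq01 : q 0 = q 1 := sub_eq_zero.1 ((wNorm_eq_zero hη).1 (hs0 ▸ hs 0))
  have hq0 : F (q 0) = 0 := by
    have h := hq_orbit 0
    rw [← hq01, add_eq_left, smul_eq_zero] at h
    exact h.resolve_left hα.ne'
  refine ⟨q 0, hq0, (tendsto_iff_wNorm_sub_tendsto_zero hη).2 ?_⟩
  rw [tendsto_iff_tendsto_subseq_of_antitone
    (hFm.antitone_wNorm_sub_of_apply_eq_zero hη hα.le hx hq0) hφ.tendsto_atTop]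
  exact (tendsto_iff_wNorm_sub_tendsto_zero hη).1 (hq 0)

/-- Proximal point method: weakly monotone case. -/
theorem stmt_10 {n : ℕ} (η : Fin n → ℝ) (hη : ∀ i, 0 < η i)
    (F : (Fin n → ℝ) → (Fin n → ℝ)) (hF : ContDiff ℝ 1 F)
    (L : ℝ) (hL : ∀ x y, wNorm η (F x - F y) ≤ L * wNorm η (x - y))
    (hmono : ∀ x, logNorm η (-(jac F x)) ≤ 0)
    (hzero : ∃ z : Fin n → ℝ, F z = 0)
    (α : ℝ) (hα : 0 < α)
    (x : ℕ → (Fin n → ℝ)) (hx : ∀ k, x (k + 1) + α • F (x (k + 1)) = x k) :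
    ∃ xs : Fin n → ℝ, F xs = 0 ∧ Tendsto x atTop (nhds xs) :=
  stmt_10_general η hη F hF hmono hzero α hα x hx
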